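/- Let |Ψ(b)⟩ = Σ_{i=1}^N √(p_b(i)) |i⟩_E |i⟩_A |i⟩_B |ψ_i(b)⟩_{AB} for b ∈ {0,1}, where {|i⟩} are orthonormal. Then F(tr_{AE}|Ψ(0)⟩⟨Ψ(0)|, tr_{AE}|Ψ(1)⟩⟨Ψ(1)|) = F(tr_A|Ψ(0)⟩⟨Ψ(0)|, tr_A|Ψ(1)⟩⟨Ψ(1)|), i.e., the environment copy of the classical record gives Bob no additional distinguishing power. -/

import Mathlib

open scoped BigOperators ComplexOrder

noncomputable section

namespace QBC

/-- Total matrix square root (junk value `0` off the PSD cone). -/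
def msqrt {n : Type*} [Fintype n] [DecidableEq n] (A : Matrix n n ℂ) : Matrix n n ℂ :=
  open scoped Classical in
  if h : A.PosSemidef then
    (h.1.eigenvectorUnitary : Matrix n n ℂ) *
      Matrix.diagonal ((↑) ∘ (Real.sqrt ∘ h.1.eigenvalues)) *
      (star (h.1.eigenvectorUnitary : Matrix n n ℂ))
  else 0

/-- Quantum fidelity `F(ρ,σ) = tr √(√ρ σ √ρ)`. -/
def fidelity {n : Type*} [Fintype n] [DecidableEq n] (ρ σ : Matrix n n ℂ) : ℝ :=
  ((msqrt (msqrt ρ * σ * msqrt ρ)).trace).re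

/-- Density operator: positive semidefinite with unit trace. -/
def IsDensity {n : Type*} [Fintype n] [DecidableEq n] (ρ : Matrix n n ℂ) : Prop :=
  ρ.PosSemidef ∧ ρ.trace = 1

/-- Inner product `⟨ψ|φ⟩`. -/
def ip {α : Type*} [Fintype α] (ψ φ : α → ℂ) : ℂ := ∑ x, star (ψ x) * φ x

/-- Rank-one projection `|ψ⟩⟨ψ|`. -/
def proj {α : Type*} [Fintype α] (ψ : α → ℂ) : Matrix α α ℂ :=
  Matrix.of fun x y => ψ x * star (ψ y)

/-- Partial trace over the first tensor factor. -/
def ptraceA {A B : Type*} [Fintype A] (M : Matrix (A × B) (A × B) ℂ) : Matrix B B ℂ :=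
  Matrix.of fun i j => ∑ a, M (a, i) (a, j)

/-- `(U ⊗ I_B)` acting on a bipartite vector. -/
def applyA {A B : Type*} [Fintype A] (U : Matrix A A ℂ) (ψ : A × B → ℂ) : A × B → ℂ :=
  fun x => ∑ a', U x.1 a' * ψ (a', x.2)

/-- The "penalized" three-party form
`Σ_i √(p i) |i⟩_E |i⟩_{A'} |i⟩_{B'} |ψ_i⟩_{AB}`, as a vector on
`E-record × A'-record × B'-record × (A × B)`. -/
def pen {I AB : Type*} [DecidableEq I] (p : I → ℝ) (ψ : I → AB → ℂ) :
    I × I × I × AB → ℂ :=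
  fun z => if z.1 = z.2.1 ∧ z.2.1 = z.2.2.1 then
    (Real.sqrt (p z.1) : ℂ) * ψ z.1 z.2.2.2 else 0

/-- The penalized state regrouped as (traced : E-record × A'-record × A) × (kept : B'-record × B). -/
def penB {I A B : Type*} [DecidableEq I] (p : I → ℝ) (ψ : I → A × B → ℂ) :
    (I × I × A) × (I × B) → ℂ :=
  fun x => pen p ψ (x.1.1, x.1.2.1, x.2.1, (x.1.2.2, x.2.2))

/-- The penalized state regrouped as (traced : A'-record × A) × (kept : E-record × B'-record × B). -/
def penEB {I A B : Type*} [DecidableEq I] (p : I → ℝ) (ψ : I → A × B → ℂ) :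
    (I × A) × (I × (I × B)) → ℂ :=
  fun x => pen p ψ (x.2.1, x.1.1, x.2.2.1, (x.1.2, x.2.2.2))

/-! Bob's record `B'` already holds every value that the environment's record `E` holds, so the
environment's copy can be produced by Bob himself: his reduced state with it, on `E B' B`, is the
image of his reduced state without it, on `B' B`, under the isometry `|i⟩|c⟩ ↦ |i⟩|i⟩|c⟩`.
Fidelity is invariant under conjugation by an isometry `V`, since `√(V X V†) = V √X V†`. -/

section Fidelity

open Matrix
open scoped MatrixOrder

variable {n m : Type*} [Fintype n] [DecidableEq n] [Fintype m] [DecidableEq m]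

lemma msqrt_eq_cfcSqrt {A : Matrix n n ℂ} (hA : A.PosSemidef) : msqrt A = CFC.sqrt A := by
  rw [msqrt, dif_pos hA, CFC.sqrt_eq_real_sqrt A hA.nonneg, cfcₙ_eq_cfc, hA.1.cfc_eq]
  simp [IsHermitian.cfc, Unitary.conjStarAlgAut_apply]

lemma posSemidef_msqrt {A : Matrix n n ℂ} (hA : A.PosSemidef) : (msqrt A).PosSemidef := by
  rw [msqrt_eq_cfcSqrt hA]
  exact nonneg_iff_posSemidef.mp (CFC.sqrt_nonneg A)

lemma msqrt_mul_mul_conjTranspose {A : Matrix n n ℂ} (hA : A.PosSemidef) {V : Matrix m n ℂ}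
    (hV : Vᴴ * V = 1) : msqrt (V * A * Vᴴ) = V * msqrt A * Vᴴ := by
  rw [msqrt_eq_cfcSqrt (hA.mul_mul_conjTranspose_same V), msqrt_eq_cfcSqrt hA]
  refine CFC.sqrt_unique ?_
    (nonneg_iff_posSemidef.mpr ((CFC.sqrt_nonneg A).posSemidef.mul_mul_conjTranspose_same V))
  calc V * CFC.sqrt A * Vᴴ * (V * CFC.sqrt A * Vᴴ)
      = V * (CFC.sqrt A * (Vᴴ * V) * CFC.sqrt A) * Vᴴ := by simp only [Matrix.mul_assoc]
    _ = V * A * Vᴴ := by rw [hV, Matrix.mul_one, CFC.sqrt_mul_sqrt_self A hA.nonneg]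

lemma fidelity_mul_mul_conjTranspose {ρ σ : Matrix n n ℂ} (hρ : ρ.PosSemidef)
    (hσ : σ.PosSemidef) {V : Matrix m n ℂ} (hV : Vᴴ * V = 1) :
    fidelity (V * ρ * Vᴴ) (V * σ * Vᴴ) = fidelity ρ σ := by
  have hM : (msqrt ρ * σ * msqrt ρ).PosSemidef := by
    simpa only [(posSemidef_msqrt hρ).1.eq] using hσ.conjTranspose_mul_mul_same (msqrt ρ)
  have hconj : V * msqrt ρ * Vᴴ * (V * σ * Vᴴ) * (V * msqrt ρ * Vᴴ)
      = V * (msqrt ρ * σ * msqrt ρ) * Vᴴ := by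
    simp only [Matrix.mul_assoc, ← Matrix.mul_assoc Vᴴ V, hV, Matrix.one_mul]
  rw [fidelity, fidelity, msqrt_mul_mul_conjTranspose hρ hV, hconj,
    msqrt_mul_mul_conjTranspose hM hV, trace_mul_cycle, hV, Matrix.one_mul]

lemma proj_eq_vecMulVec {α : Type*} [Fintype α] (ψ : α → ℂ) : proj ψ = vecMulVec ψ (star ψ) :=
  rfl

lemma posSemidef_proj {α : Type*} [Fintype α] (ψ : α → ℂ) : (proj ψ).PosSemidef :=
  proj_eq_vecMulVec ψ ▸ posSemidef_vecMulVec_self_star ψ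

lemma ptraceA_eq_sum_submatrix {A B : Type*} [Fintype A] (M : Matrix (A × B) (A × B) ℂ) :
    ptraceA M = ∑ a, M.submatrix (a, ·) (a, ·) := by
  ext
  simp [ptraceA, Matrix.sum_apply]

lemma posSemidef_ptraceA {A B : Type*} [Fintype A] [Fintype B] {M : Matrix (A × B) (A × B) ℂ}
    (hM : M.PosSemidef) : (ptraceA M).PosSemidef := by
  rw [ptraceA_eq_sum_submatrix]
  exact posSemidef_sum _ fun a _ => hM.submatrix _

end Fidelity

section Record

open Matrix

variable {I A B : Type*} [Fintype I] [DecidableEq I] [Fintype A] [Fintype B]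

def copyRecord (I B : Type*) [DecidableEq I] [DecidableEq B] : Matrix (I × (I × B)) (I × B) ℂ :=
  Matrix.of fun x y => if x = (y.1, y.1, y.2) then 1 else 0

variable [DecidableEq B] in
lemma copyRecord_conjTranspose_mul_self : (copyRecord I B)ᴴ * copyRecord I B = 1 := by
  ext ⟨i, c⟩ ⟨j, d⟩
  simp [copyRecord, mul_apply, one_apply]
  grind

variable [DecidableEq B] in
lemma copyRecord_mul_apply {κ : Type*} (M : Matrix (I × B) κ ℂ) (e b' : I) (c : B) (z : κ) :
    (copyRecord I B * M) (e, b', c) z = if e = b' then M (e, c) z else 0 := by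
  simp [copyRecord, mul_apply, Fintype.sum_prod_type, ite_and, eq_comm (a := b')]

variable [DecidableEq B] in
lemma mul_copyRecord_conjTranspose_apply {κ : Type*} (M : Matrix κ (I × B) ℂ) (f b'' : I) (d : B)
    (z : κ) : (M * (copyRecord I B)ᴴ) z (f, b'', d) = if f = b'' then M z (f, d) else 0 := by
  simp [copyRecord, mul_apply, Fintype.sum_prod_type, ite_and, apply_ite (starRingEnd ℂ),
    eq_comm (a := b'')]

lemma ptraceA_proj_penB_apply (p : I → ℝ) (ψ : I → A × B → ℂ) (i j : I) (c d : B) :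
    ptraceA (proj (penB p ψ)) (i, c) (j, d)
      = if i = j then (√(p i) : ℂ) * √(p i) * ptraceA (proj (ψ i)) c d else 0 := by
  simp only [ptraceA, proj, penB, pen, of_apply, Fintype.sum_prod_type, apply_ite star, star_zero,
    ite_and, ite_mul, zero_mul, mul_ite, mul_zero, Finset.sum_ite_irrel, Finset.sum_const_zero,
    Finset.sum_ite_eq, Finset.sum_ite_eq', Finset.mem_univ, if_true, Finset.mul_sum]
  rcases eq_or_ne i j with rfl | hij
  · simp only [if_true, star_mul', Complex.star_def, Complex.conj_ofReal]
    exact Finset.sum_congr rfl fun a _ => by ring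
  · simp [hij, hij.symm]

lemma ptraceA_proj_penEB_apply (p : I → ℝ) (ψ : I → A × B → ℂ) (e b' f b'' : I) (c d : B) :
    ptraceA (proj (penEB p ψ)) (e, b', c) (f, b'', d)
      = if f = b'' then if e = b' then ptraceA (proj (penB p ψ)) (e, c) (f, d) else 0 else 0 := by
  rw [ptraceA_proj_penB_apply]
  simp only [ptraceA, proj, penEB, pen, of_apply, Fintype.sum_prod_type, apply_ite star, star_zero,
    ite_and, ite_mul, zero_mul, mul_ite, mul_zero, Finset.sum_ite_irrel, Finset.sum_const_zero,
    Finset.sum_ite_eq, Finset.mem_univ, if_true, Finset.mul_sum]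
  by_cases h1 : f = b'' <;> by_cases h2 : e = f <;> by_cases h3 : e = b' <;> simp_all
  exact Finset.sum_congr rfl fun a _ => by ring

variable [DecidableEq B] in
lemma ptraceA_proj_penEB (p : I → ℝ) (ψ : I → A × B → ℂ) :
    ptraceA (proj (penEB p ψ))
      = copyRecord I B * ptraceA (proj (penB p ψ)) * (copyRecord I B)ᴴ := by
  ext ⟨e, b', c⟩ ⟨f, b'', d⟩
  rw [ptraceA_proj_penEB_apply, mul_copyRecord_conjTranspose_apply, copyRecord_mul_apply]

end Record

theorem environment_record_gives_no_advantage_general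
    {I A B : Type*} [Fintype I] [DecidableEq I] [Fintype A]
    [Fintype B] [DecidableEq B]
    (p : Bool → I → ℝ)
    (ψ : I → Bool → A × B → ℂ) :
    fidelity (ptraceA (proj (penB (p false) (fun i => ψ i false))))
             (ptraceA (proj (penB (p true) (fun i => ψ i true))))
      = fidelity (ptraceA (proj (penEB (p false) (fun i => ψ i false))))
                 (ptraceA (proj (penEB (p true) (fun i => ψ i true)))) := by
  rw [ptraceA_proj_penEB, ptraceA_proj_penEB]
  exact (fidelity_mul_mul_conjTranspose (posSemidef_ptraceA (posSemidef_proj _))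
    (posSemidef_ptraceA (posSemidef_proj _)) copyRecord_conjTranspose_mul_self).symm

/-- the environment copy of the classical record gives Bob no
additional distinguishing power:
`F(tr_{AE}|Ψ(0)⟩⟨Ψ(0)|, tr_{AE}|Ψ(1)⟩⟨Ψ(1)|) = F(tr_A|Ψ(0)⟩⟨Ψ(0)|, tr_A|Ψ(1)⟩⟨Ψ(1)|)`. -/
theorem environment_record_gives_no_advantage
    {I A B : Type*} [Fintype I] [DecidableEq I] [Fintype A] [DecidableEq A]
    [Fintype B] [DecidableEq B]
    (p : Bool → I → ℝ) (hp : ∀ b, (∀ i, 0 ≤ p b i) ∧ ∑ i, p b i = 1)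
    (ψ : I → Bool → A × B → ℂ) (hψ : ∀ i b, ip (ψ i b) (ψ i b) = 1) :
    fidelity (ptraceA (proj (penB (p false) (fun i => ψ i false))))
             (ptraceA (proj (penB (p true) (fun i => ψ i true))))
      = fidelity (ptraceA (proj (penEB (p false) (fun i => ψ i false))))
                 (ptraceA (proj (penEB (p true) (fun i => ψ i true)))) :=
  environment_record_gives_no_advantage_general p ψ

end QBC
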